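/- arXiv:2106.00513 — 2 statements merged into one kernel-verified Lean document; each statement's English description precedes it below -/
import Mathlib

section
/- Let n be a positive odd integer. Then the balanced papillon graph P_n does not have the PMH-property. -/
open SimpleGraph


/-- Vertices of the papillon graph `P_{r,ℓ}`: `(false, i)` is the outer vertex `u_i`
and `(true, i)` is the inner vertex `v_i`, where indices are taken in `ZMod (2(r+ℓ))`
(so the 1-based index `i ∈ {1, …, 2(r+ℓ)}` corresponds to `i mod 2(r+ℓ)`). -/
abbrev PapVert (N : ℕ) : Type := Bool × ZMod N

/-- The outer vertex `u_i` (1-based index `i`). -/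
def pu (N : ℕ) (i : ℕ) : PapVert N := (false, (i : ZMod N))

/-- The inner vertex `v_i` (1-based index `i`). -/
def pv (N : ℕ) (i : ℕ) : PapVert N := (true, (i : ZMod N))

/-- The edge set of the papillon graph `P_{r,ℓ}`: the outer-cycle edges, the spokes,
and the inner-cycle edges. -/
def papillonEdges (r l : ℕ) : Set (Sym2 (PapVert (2 * (r + l)))) :=
  {e | (∃ i, 1 ≤ i ∧ i ≤ 2 * (r + l) - 1 ∧
          e = s(pu (2 * (r + l)) i, pu (2 * (r + l)) (i + 1)))
      ∨ e = s(pu (2 * (r + l)) (2 * (r + l)), pu (2 * (r + l)) 1)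
      ∨ (∃ i, 1 ≤ i ∧ i ≤ 2 * (r + l) ∧
          e = s(pu (2 * (r + l)) i, pv (2 * (r + l)) i))
      ∨ (∃ i, 1 ≤ i ∧ i ≤ r + l ∧
          e = s(pv (2 * (r + l)) (2 * i - 1), pv (2 * (r + l)) (2 * i)))
      ∨ (∃ i, 1 ≤ i ∧ i ≤ r + l - 1 ∧ i ≠ min r l ∧
          e = s(pv (2 * (r + l)) (2 * i - 1), pv (2 * (r + l)) (2 * i + 2)))
      ∨ e = s(pv (2 * (r + l)) 2, pv (2 * (r + l)) (2 * min r l + 2))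
      ∨ e = s(pv (2 * (r + l)) (2 * min r l - 1), pv (2 * (r + l)) (2 * (r + l) - 1))}

/-- The papillon graph `P_{r,ℓ}`. -/
def papillon (r l : ℕ) : SimpleGraph (PapVert (2 * (r + l))) :=
  SimpleGraph.fromEdgeSet (papillonEdges r l)


/-- `M` is a perfect matching of `G`, viewed as a set of edges: every vertex lies on
exactly one edge of `M`. -/
def IsPerfMatching {V : Type*} (G : SimpleGraph V) (M : Set (Sym2 V)) : Prop :=
  M ⊆ G.edgeSet ∧ ∀ v : V, ∃! e, e ∈ M ∧ v ∈ e

/-- `F` is (the edge set of) a 2-factor of `G`: a spanning subgraph in which every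
vertex is incident with exactly two edges of `F`. -/
def Is2Factor {V : Type*} (G : SimpleGraph V) (F : Set (Sym2 V)) : Prop :=
  F ⊆ G.edgeSet ∧ ∀ v : V, ∃ e₁ e₂, e₁ ≠ e₂ ∧ e₁ ∈ F ∧ e₂ ∈ F ∧ v ∈ e₁ ∧ v ∈ e₂ ∧
    ∀ e ∈ F, v ∈ e → e = e₁ ∨ e = e₂

/-- Every cycle of `G` all of whose edges lie in `F` has even length. -/
def HasOnlyEvenCycles {V : Type*} (G : SimpleGraph V) (F : Set (Sym2 V)) : Prop :=
  ∀ (x : V) (c : G.Walk x x), c.IsCycle → (∀ e ∈ c.edges, e ∈ F) → Even c.length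

/-- `G` is even-2-factorable: every 2-factor of `G` contains only even cycles. -/
def IsE2F {V : Type*} (G : SimpleGraph V) : Prop :=
  ∀ F, Is2Factor G F → HasOnlyEvenCycles G F

/-- `S` is the edge set of a Hamiltonian cycle of `G`. -/
def IsHamCycleSet {V : Type*} [DecidableEq V] (G : SimpleGraph V) (S : Set (Sym2 V)) : Prop :=
  ∃ (x : V) (c : G.Walk x x), c.IsHamiltonianCycle ∧ S = {e | e ∈ c.edges}

/-- `G` has the Perfect-Matching-Hamiltonian property. -/
def HasPMH {V : Type*} [DecidableEq V] (G : SimpleGraph V) : Prop :=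
  ∀ M, IsPerfMatching G M → ∃ N, IsPerfMatching G N ∧ IsHamCycleSet G (M ∪ N)

/-!
Let `M` be the perfect matching `{u_{2i-1} u_{2i}, v_{2i-1} v_{2i}}`. Each vertex `w` of `P_n` has
three neighbours: its `M`-mate, its spoke mate, and one more vertex `cycleMate n w`; the edges
not in `M` form a 2-factor `F` (the spokes and the edges `w (cycleMate n w)`), which for odd `n`
is a single Hamiltonian cycle. If `M ∪ N` is a Hamiltonian cycle, then `N` avoids `M`, so `N` is
one of the two perfect matchings of `F`: all the spokes, making `M ∪ N` a union of 4-cycles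
`u_{2i-1} u_{2i} v_{2i} v_{2i-1}`, or no spoke, so that `M ∪ N` never leaves the outer cycle.
-/

theorem Sym2.mk_apply_eq_of_mem {V : Type*} {f : V → V} (hf : Function.Involutive f) {v w : V}
    (h : v ∈ s(w, f w)) : s(w, f w) = s(v, f v) := by
  rcases Sym2.mem_iff.mp h with rfl | rfl
  · rfl
  · rw [hf w, Sym2.eq_swap]

theorem Function.Involutive.apply_mem_iff {α : Type*} {f : α → α} (hf : Function.Involutive f)
    {S : Set α} (hS : ∀ x ∈ S, f x ∈ S) (x : α) : f x ∈ S ↔ x ∈ S :=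
  ⟨fun h => hf x ▸ hS _ h, hS x⟩

theorem Nat.iff_zero_of_forall_lt_succ_iff {P : ℕ → Prop} {L : ℕ}
    (h : ∀ k < L, P (k + 1) ↔ P k) : ∀ k ≤ L, P k ↔ P 0
  | 0, _ => Iff.rfl
  | k + 1, hk => (h k hk).trans (Nat.iff_zero_of_forall_lt_succ_iff h k (by omega))

theorem ZMod.natCast_ne_natCast_of_lt {c a b : ℕ} (ha : a < c) (hb : b < c) (hab : a ≠ b) :
    (a : ZMod c) ≠ b := by
  rwa [Ne, ZMod.natCast_eq_natCast_iff', Nat.mod_eq_of_lt ha, Nat.mod_eq_of_lt hb]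

section Matchings

variable {V : Type*} {G : SimpleGraph V}

theorem IsPerfMatching.eq_of_mem {M : Set (Sym2 V)} (hM : IsPerfMatching G M) {e e' : Sym2 V}
    {v : V} (he : e ∈ M) (hv : v ∈ e) (he' : e' ∈ M) (hv' : v ∈ e') : e = e' :=
  (hM.2 v).unique ⟨he, hv⟩ ⟨he', hv'⟩

theorem isPerfMatching_range_mk {f : V → V} (hf : Function.Involutive f)
    (hadj : ∀ v, G.Adj v (f v)) : IsPerfMatching G (Set.range fun v => s(v, f v)) := by
  refine ⟨?_, fun v => ⟨s(v, f v), ⟨⟨v, rfl⟩, Sym2.mem_mk_left _ _⟩, ?_⟩⟩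
  · rintro _ ⟨v, rfl⟩
    exact hadj v
  · rintro _ ⟨⟨w, rfl⟩, hv⟩
    exact Sym2.mk_apply_eq_of_mem hf hv

theorem IsPerfMatching.mk_apply_mem {N : Set (Sym2 V)} (hN : IsPerfMatching G N) {f g : V → V}
    (hg : Function.Involutive g) (hfg : ∀ v, f v ≠ g v)
    (hN' : ∀ e ∈ N, ∀ v ∈ e, e = s(v, f v) ∨ e = s(v, g v)) {v : V} (hv : s(v, f v) ∈ N) :
    s(g v, f (g v)) ∈ N := by
  obtain ⟨e, ⟨he, hgv⟩, -⟩ := hN.2 (g v)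
  rcases hN' e he (g v) hgv with rfl | rfl
  · exact he
  · have h := hN.eq_of_mem he (by simp [hg v]) hv (Sym2.mem_mk_left _ _)
    rw [hg v, Sym2.eq_swap, Sym2.congr_right] at h
    exact absurd h.symm (hfg v)

variable [DecidableEq V]

theorem IsHamCycleSet.disjoint {M N : Set (Sym2 V)} (hM : IsPerfMatching G M)
    (hN : IsPerfMatching G N) (hMN : IsHamCycleSet G (M ∪ N)) : Disjoint M N := by
  obtain ⟨x, c, hc, hS⟩ := hMN
  refine Set.disjoint_left.mpr fun e heM heN => ?_
  induction e using Sym2.ind with | _ v w => ?_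
  have hnbr : ∀ z ∈ c.toSubgraph.neighborSet v, s(v, z) = s(v, w) := by
    intro z hz
    have hz' : s(v, z) ∈ M ∪ N := by
      rw [hS]
      exact Walk.adj_toSubgraph_iff_mem_edges.mp hz
    rcases hz' with h | h
    · exact hM.eq_of_mem h (Sym2.mem_mk_left _ _) heM (Sym2.mem_mk_left _ _)
    · exact hN.eq_of_mem h (Sym2.mem_mk_left _ _) heN (Sym2.mem_mk_left _ _)
  obtain ⟨a, b, hab, hnb⟩ :=
    Set.ncard_eq_two.mp (hc.isCycle.ncard_neighborSet_toSubgraph_eq_two (hc.mem_support v))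
  have ha := hnbr a (by simp [hnb])
  have hb := hnbr b (by simp [hnb])
  exact hab (Sym2.congr_right.mp (ha.trans hb.symm))

theorem IsHamCycleSet.mem_of_closed {S : Set (Sym2 V)} (hS : IsHamCycleSet G S) {A : Set V}
    (hA : ∀ a b, s(a, b) ∈ S → a ∈ A → b ∈ A) {v : V} (hv : v ∈ A) (w : V) : w ∈ A := by
  obtain ⟨x, c, hc, rfl⟩ := hS
  by_contra hw
  let p := (c.takeUntil v (hc.mem_support v)).reverse.append (c.takeUntil w (hc.mem_support w))
  obtain ⟨d, hd, hdA, hdA'⟩ := p.exists_boundary_dart A hv hw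
  have hdc : d.edge ∈ c.edges := by
    have : d.edge ∈ p.edges := List.mem_map_of_mem hd
    simp only [p, Walk.edges_append, Walk.edges_reverse, List.mem_append, List.mem_reverse] at this
    rcases this with h | h <;> exact c.edges_takeUntil_subset_edges _ h
  exact hdA' (hA _ _ hdc hdA)

theorem IsHamCycleSet.mem_of_invariant {S : Set (Sym2 V)} (hS : IsHamCycleSet G S) {f g : V → V}
    (hfg : ∀ e ∈ S, ∀ v ∈ e, e = s(v, f v) ∨ e = s(v, g v)) {A : Set V}
    (hf : ∀ v ∈ A, f v ∈ A) (hg : ∀ v ∈ A, g v ∈ A) {v : V} (hv : v ∈ A) (w : V) : w ∈ A := by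
  refine hS.mem_of_closed (fun a b hab ha => ?_) hv w
  rcases hfg _ hab a (Sym2.mem_mk_left a b) with h | h <;> rw [Sym2.congr_right.mp h]
  exacts [hf a ha, hg a ha]

end Matchings

namespace Papillon

def parity (m : ℕ) : ZMod (2 * m) →+* ZMod 2 := ZMod.castHom (dvd_mul_right 2 m) (ZMod 2)

section Indices

variable {m : ℕ}

theorem parity_natCast_eq_one_iff (i : ℕ) : parity m i = 1 ↔ Odd i := by
  rw [map_natCast, ZMod.natCast_eq_one_iff_odd]

theorem parity_one : parity m 1 = 1 := map_one _

theorem parity_three : parity m 3 = 1 := by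
  rw [map_ofNat]
  decide

theorem parity_add_eq_one_iff {x y : ZMod (2 * m)} (hy : parity m y = 1) :
    parity m (x + y) = 1 ↔ parity m x ≠ 1 := by
  rw [map_add, hy]
  generalize parity m x = a
  revert a
  decide

theorem parity_sub_eq_one_iff {x y : ZMod (2 * m)} (hy : parity m y = 1) :
    parity m (x - y) = 1 ↔ parity m x ≠ 1 := by
  rw [map_sub, hy]
  generalize parity m x = a
  revert a
  decide

theorem parity_add_four_mul (a : ZMod (2 * m)) (k : ℕ) :
    parity m (a + 4 * k) = parity m a := by
  have h4 : (4 : ZMod 2) = 0 := by decide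
  rw [map_add, map_mul, map_ofNat, h4, zero_mul, add_zero]

def pairMate (x : ZMod (2 * m)) : ZMod (2 * m) := if parity m x = 1 then x + 1 else x - 1

def outerMate (x : ZMod (2 * m)) : ZMod (2 * m) := if parity m x = 1 then x - 1 else x + 1

theorem pairMate_of_odd {x : ZMod (2 * m)} (hx : parity m x = 1) : pairMate x = x + 1 :=
  if_pos hx

theorem pairMate_of_even {x : ZMod (2 * m)} (hx : parity m x ≠ 1) : pairMate x = x - 1 :=
  if_neg hx

theorem outerMate_of_odd {x : ZMod (2 * m)} (hx : parity m x = 1) : outerMate x = x - 1 :=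
  if_pos hx

theorem outerMate_of_even {x : ZMod (2 * m)} (hx : parity m x ≠ 1) : outerMate x = x + 1 :=
  if_neg hx

theorem pairMate_involutive : Function.Involutive (pairMate (m := m)) := by
  intro x
  by_cases hx : parity m x = 1
  · rw [pairMate_of_odd hx, pairMate_of_even fun h => (parity_add_eq_one_iff parity_one).mp h hx,
      add_sub_cancel_right]
  · rw [pairMate_of_even hx, pairMate_of_odd ((parity_sub_eq_one_iff parity_one).mpr hx),
      sub_add_cancel]

theorem outerMate_involutive : Function.Involutive (outerMate (m := m)) := by
  intro x
  by_cases hx : parity m x = 1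
  · rw [outerMate_of_odd hx, outerMate_of_even fun h => (parity_sub_eq_one_iff parity_one).mp h hx,
      sub_add_cancel]
  · rw [outerMate_of_even hx, outerMate_of_odd ((parity_add_eq_one_iff parity_one).mpr hx),
      add_sub_cancel_right]

end Indices

section Inner

variable {n : ℕ}

theorem four_mul_eq_zero : (4 * n : ZMod (2 * (n + n))) = 0 := by
  have h := ZMod.natCast_self (2 * (n + n))
  push_cast at h
  linear_combination h

theorem parity_two_ne_one : parity (n + n) 2 ≠ 1 := by
  rw [map_ofNat]
  decide

theorem parity_neg_one : parity (n + n) (-1) = 1 := by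
  rw [map_neg, map_one]
  decide

theorem parity_two_mul_sub_one : parity (n + n) (2 * n - 1) = 1 := by
  rw [map_sub, map_mul, map_ofNat, map_natCast, map_one]
  generalize (n : ZMod 2) = a
  revert a
  decide

theorem parity_two_mul_add_two_ne_one : parity (n + n) (2 * n + 2) ≠ 1 := by
  rw [map_add, map_mul, map_ofNat, map_natCast]
  generalize (n : ZMod 2) = a
  revert a
  decide

theorem parity_two_mul_add_three : parity (n + n) (2 * n + 3) = 1 := by
  rw [map_add, map_mul, map_ofNat, map_ofNat, map_natCast]
  generalize (n : ZMod 2) = a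
  revert a
  decide

/-- Away from the twist, `v_{2i-1}` is joined to `v_{2i+2}`; the two twisted edges
`v_{2n-1} v_{4n-1}` and `v_2 v_{2n+2}` join indices `2n` apart. -/
def innerMate (n : ℕ) (x : ZMod (2 * (n + n))) : ZMod (2 * (n + n)) :=
  if x = 2 * n - 1 ∨ x = -1 ∨ x = 2 ∨ x = 2 * n + 2 then x + 2 * n
  else if parity (n + n) x = 1 then x + 3 else x - 3

theorem innerMate_of_twist {x : ZMod (2 * (n + n))}
    (hx : x = 2 * n - 1 ∨ x = -1 ∨ x = 2 ∨ x = 2 * n + 2) : innerMate n x = x + 2 * n :=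
  if_pos hx

theorem innerMate_of_odd {x : ZMod (2 * (n + n))} (hx : parity (n + n) x = 1)
    (h₁ : x ≠ 2 * n - 1) (h₂ : x ≠ -1) : innerMate n x = x + 3 := by
  have h₃ : x ≠ 2 := fun h => parity_two_ne_one (h ▸ hx)
  have h₄ : x ≠ 2 * n + 2 := fun h => parity_two_mul_add_two_ne_one (h ▸ hx)
  rw [innerMate, if_neg (by tauto), if_pos hx]

theorem innerMate_of_even {x : ZMod (2 * (n + n))} (hx : parity (n + n) x ≠ 1)
    (h₃ : x ≠ 2) (h₄ : x ≠ 2 * n + 2) : innerMate n x = x - 3 := by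
  have h₁ : x ≠ 2 * n - 1 := fun h => hx (h ▸ parity_two_mul_sub_one)
  have h₂ : x ≠ -1 := fun h => hx (h ▸ parity_neg_one)
  rw [innerMate, if_neg (by tauto), if_neg hx]

theorem innerMate_involutive : Function.Involutive (innerMate n) := by
  intro x
  by_cases ht : x = 2 * n - 1 ∨ x = -1 ∨ x = 2 ∨ x = 2 * n + 2
  · have h4 := four_mul_eq_zero (n := n)
    have ht' : x + 2 * n = 2 * n - 1 ∨ x + 2 * n = -1 ∨ x + 2 * n = 2 ∨
        x + 2 * n = 2 * n + 2 := by
      rcases ht with rfl | rfl | rfl | rfl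
      · exact .inr (.inl (by linear_combination h4))
      · exact .inl (by ring)
      · exact .inr (.inr (.inr (by ring)))
      · exact .inr (.inr (.inl (by linear_combination h4)))
    rw [innerMate_of_twist ht, innerMate_of_twist ht']
    linear_combination h4
  · simp only [not_or] at ht
    obtain ⟨h₁, h₂, h₃, h₄⟩ := ht
    by_cases hx : parity (n + n) x = 1
    · rw [innerMate_of_odd hx h₁ h₂,
        innerMate_of_even (fun h => (parity_add_eq_one_iff parity_three).mp h hx)
          (fun h => h₂ (by linear_combination h)) (fun h => h₁ (by linear_combination h)),
        add_sub_cancel_right]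
    · rw [innerMate_of_even hx h₃ h₄,
        innerMate_of_odd ((parity_sub_eq_one_iff parity_three).mpr hx)
          (fun h => h₄ (by linear_combination h)) (fun h => h₃ (by linear_combination h)),
        sub_add_cancel]

end Inner

section Vertices

variable {m n : ℕ}

def matchMate (w : PapVert (2 * m)) : PapVert (2 * m) := (w.1, pairMate w.2)

def spokeMate {N : ℕ} (w : PapVert N) : PapVert N := (!w.1, w.2)

def cycleMate (n : ℕ) : PapVert (2 * (n + n)) → PapVert (2 * (n + n))
  | (false, x) => (false, outerMate x)
  | (true, x) => (true, innerMate n x)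

theorem matchMate_involutive : Function.Involutive (matchMate (m := m)) := fun w => by
  simp [matchMate, pairMate_involutive w.2]

theorem spokeMate_involutive {N : ℕ} : Function.Involutive (spokeMate (N := N)) := fun w => by
  simp [spokeMate]

theorem cycleMate_involutive : Function.Involutive (cycleMate n)
  | (false, x) => by simp [cycleMate, outerMate_involutive x]
  | (true, x) => by simp [cycleMate, innerMate_involutive x]

theorem spokeMate_ne_cycleMate : ∀ w : PapVert (2 * (n + n)), spokeMate w ≠ cycleMate n w
  | (false, _) | (true, _) => by simp [spokeMate, cycleMate]

theorem natCast_two_mul_sub_one (hn : 1 ≤ n) :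
    ((2 * n - 1 : ℕ) : ZMod (2 * (n + n))) = 2 * n - 1 := by
  rw [Nat.cast_pred (by omega)]
  push_cast
  ring

theorem innerMate_natCast_two_mul_sub_one {i : ℕ} (hi₁ : 1 ≤ i) (hi₂ : i ≤ n + n - 1)
    (hin : i ≠ n) : innerMate n (2 * i - 1 : ℕ) = (2 * i + 2 : ℕ) := by
  have hodd : parity (n + n) ((2 * i - 1 : ℕ) : ZMod (2 * (n + n))) = 1 :=
    (parity_natCast_eq_one_iff _).mpr ⟨i - 1, by omega⟩
  have h₁ : ((2 * i - 1 : ℕ) : ZMod (2 * (n + n))) ≠ 2 * n - 1 := by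
    rw [← natCast_two_mul_sub_one (by omega)]
    exact ZMod.natCast_ne_natCast_of_lt (by omega) (by omega) (by omega)
  have h₂ : ((2 * i - 1 : ℕ) : ZMod (2 * (n + n))) ≠ -1 := by
    intro h
    have h0 : ((2 * i : ℕ) : ZMod (2 * (n + n))) = 0 := by
      rw [Nat.cast_pred (by omega)] at h
      linear_combination h
    rw [ZMod.natCast_eq_zero_iff] at h0
    exact Nat.not_dvd_of_pos_of_lt (by omega) (by omega) h0
  rw [innerMate_of_odd hodd h₁ h₂, Nat.cast_pred (by omega)]
  push_cast
  ring

theorem exists_eq_mate_of_mem_papillonEdges (hn : 1 ≤ n) {e : Sym2 (PapVert (2 * (n + n)))}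
    (he : e ∈ papillonEdges n n) :
    ∃ w, e = s(w, matchMate w) ∨ e = s(w, spokeMate w) ∨ e = s(w, cycleMate n w) := by
  simp only [papillonEdges, min_self, Set.mem_ofPred_eq] at he
  rcases he with ⟨i, hi₁, hi₂, rfl⟩ | rfl | ⟨i, hi₁, hi₂, rfl⟩ | ⟨i, hi₁, hi₂, rfl⟩ |
    ⟨i, hi₁, hi₂, hin, rfl⟩ | rfl | rfl
  · refine ⟨pu _ i, ?_⟩
    by_cases hi : Odd i
    · refine .inl ?_
      simp [pu, matchMate, pairMate_of_odd ((parity_natCast_eq_one_iff i).mpr hi)]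
    · refine .inr (.inr ?_)
      simp [pu, cycleMate, outerMate_of_even (mt (parity_natCast_eq_one_iff i).mp hi)]
  · refine ⟨pu _ (2 * (n + n)), .inr (.inr ?_)⟩
    simp [pu, cycleMate, outerMate_of_even (x := 0) (by simp)]
  · exact ⟨pu _ i, .inr (.inl rfl)⟩
  · refine ⟨pv _ (2 * i - 1), .inl ?_⟩
    have hodd : parity (n + n) ((2 * i - 1 : ℕ) : ZMod (2 * (n + n))) = 1 :=
      (parity_natCast_eq_one_iff _).mpr ⟨i - 1, by omega⟩
    simp only [pv, matchMate, pairMate_of_odd hodd]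
    rw [Nat.cast_pred (by omega)]
    push_cast
    ring_nf
  · refine ⟨pv _ (2 * i - 1), .inr (.inr ?_)⟩
    simp only [pv, cycleMate, innerMate_natCast_two_mul_sub_one hi₁ hi₂ hin]
  · refine ⟨pv _ 2, .inr (.inr ?_)⟩
    simp only [pv, cycleMate, Nat.cast_ofNat, innerMate_of_twist (.inr (.inr (.inl rfl)))]
    push_cast
    ring_nf
  · refine ⟨pv _ (2 * n - 1), .inr (.inr ?_)⟩
    simp only [pv, cycleMate, natCast_two_mul_sub_one hn, innerMate_of_twist (.inl rfl)]
    rw [Nat.cast_pred (by omega)]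
    push_cast
    ring_nf

end Vertices

section Connectivity

variable {n : ℕ}

theorem outerMate_innerMate_of_odd {x : ZMod (2 * (n + n))} (hx : parity (n + n) x = 1)
    (h₁ : x ≠ 2 * n - 1) (h₂ : x ≠ -1) : outerMate (innerMate n x) = x + 4 := by
  rw [innerMate_of_odd hx h₁ h₂,
    outerMate_of_even fun h => (parity_add_eq_one_iff parity_three).mp h hx]
  ring

theorem natCast_four_mul_add_four_ne_zero (k : ℕ) (hk : k + 1 < n) :
    ((4 * k + 4 : ℕ) : ZMod (2 * (n + n))) ≠ 0 := by
  rw [Ne, ZMod.natCast_eq_zero_iff]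
  exact Nat.not_dvd_of_pos_of_lt (by omega) (by omega)

theorem natCast_two_mul_add_four_mul_add_four_ne_zero (hodd : Odd n) (k : ℕ) :
    ((2 * n + 4 * k + 4 : ℕ) : ZMod (2 * (n + n))) ≠ 0 := by
  rw [Ne, ZMod.natCast_eq_zero_iff]
  intro h
  obtain ⟨j, rfl⟩ := hodd
  have : 4 ∣ 2 * (2 * j + 1) + 4 * k + 4 := (Dvd.intro (2 * j + 1) (by ring)).trans h
  omega

theorem exists_eq_of_parity_eq_one (hodd : Odd n) {y : ZMod (2 * (n + n))}
    (hy : parity (n + n) y = 1) : ∃ k ≤ n - 1, y = 3 + 4 * k ∨ y = 2 * n + 3 + 4 * k := by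
  have h4 := four_mul_eq_zero (n := n)
  obtain ⟨j, rfl⟩ := hodd
  obtain ⟨v, hv, rfl⟩ : ∃ v < 2 * (2 * j + 1 + (2 * j + 1)), y = v :=
    ⟨y.val, ZMod.val_lt y, (ZMod.natCast_zmod_val y).symm⟩
  rw [parity_natCast_eq_one_iff, Nat.odd_iff] at hy
  obtain ⟨k, hk, hvk⟩ : ∃ k ≤ 2 * j + 1 - 1, v = 3 + 4 * k ∨ v = 2 * (2 * j + 1) + 3 + 4 * k ∨
      v + 4 * (2 * j + 1) = 2 * (2 * j + 1) + 3 + 4 * k := by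
    rcases (by omega : v % 4 = 1 ∨ v % 4 = 3) with h | h
    · by_cases hq : j + 1 ≤ v / 4
      · exact ⟨v / 4 - j - 1, by omega, .inr (.inl (by omega))⟩
      · exact ⟨v / 4 + j, by omega, .inr (.inr (by omega))⟩
    · exact ⟨v / 4, by omega, .inl (by omega)⟩
  refine ⟨k, hk, ?_⟩
  push_cast at h4 ⊢
  rcases hvk with h | h | h <;>
    have h' := congrArg (Nat.cast : ℕ → ZMod (2 * (2 * j + 1 + (2 * j + 1)))) h <;>
    push_cast at h'
  · exact .inl (by linear_combination h')
  · exact .inr (by linear_combination h')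
  · exact .inr (by linear_combination h' - h4)

theorem add_four_mul_mem_iff {S : Set (ZMod (2 * (n + n)))} (hβ : ∀ x ∈ S, outerMate x ∈ S)
    (hσ : ∀ x ∈ S, innerMate n x ∈ S) {a : ZMod (2 * (n + n))} (ha : parity (n + n) a = 1)
    {L : ℕ} (hreg : ∀ k < L, a + 4 * k ≠ 2 * n - 1 ∧ a + 4 * k ≠ -1) :
    ∀ k ≤ L, a + 4 * k ∈ S ↔ a ∈ S := by
  intro k hk
  refine (Nat.iff_zero_of_forall_lt_succ_iff (P := fun k : ℕ => a + 4 * k ∈ S)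
    (fun k hk => ?_) k hk).trans (by simp)
  obtain ⟨h₁, h₂⟩ := hreg k hk
  have hstep := outerMate_innerMate_of_odd ((parity_add_four_mul a k).trans ha) h₁ h₂
  calc a + 4 * ((k + 1 : ℕ) : ZMod (2 * (n + n))) ∈ S
      ↔ outerMate (innerMate n (a + 4 * k)) ∈ S := by rw [hstep]; push_cast; ring_nf
    _ ↔ a + 4 * k ∈ S :=
      (outerMate_involutive.apply_mem_iff hβ _).trans (innerMate_involutive.apply_mem_iff hσ _)

/-- The odd indices form two chains `3 + 4k` and `2n + 3 + 4k` (`k < n`, using that `n` is odd),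
along which `x ↦ outerMate (innerMate n x) = x + 4` walks; each chain is broken only where it
meets the twist, at `-1` and at `2n - 1` respectively. -/
theorem mem_of_outerMate_innerMate_invariant (hodd : Odd n)
    {S : Set (ZMod (2 * (n + n)))} (hβ : ∀ x ∈ S, outerMate x ∈ S)
    (hσ : ∀ x ∈ S, innerMate n x ∈ S) {x : ZMod (2 * (n + n))} (hx : x ∈ S)
    (y : ZMod (2 * (n + n))) : y ∈ S := by
  have h4 := four_mul_eq_zero (n := n)
  have hA := natCast_four_mul_add_four_ne_zero (n := n)
  have hB := natCast_two_mul_add_four_mul_add_four_ne_zero hodd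
  have class₃ := add_four_mul_mem_iff hβ hσ parity_three (L := n - 1) fun k hk =>
    ⟨fun h => hB k (by push_cast; linear_combination h + h4),
      fun h => hA k (by omega) (by push_cast; linear_combination h)⟩
  have class₁ := add_four_mul_mem_iff hβ hσ parity_two_mul_add_three (L := n - 1) fun k hk =>
    ⟨fun h => hA k (by omega) (by push_cast; linear_combination h),
      fun h => hB k (by push_cast; linear_combination h)⟩
  -- the two classes are joined by the twisted edge `v_{2n-1} v_{4n-1}`
  have link : (2 * n + 3 : ZMod (2 * (n + n))) ∈ S ↔ (3 : ZMod (2 * (n + n))) ∈ S := by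
    have e₁ : 2 * n + 3 + 4 * ((n - 1 : ℕ) : ZMod (2 * (n + n))) = 2 * n - 1 := by
      rw [Nat.cast_pred hodd.pos]
      linear_combination h4
    have e₃ : 3 + 4 * ((n - 1 : ℕ) : ZMod (2 * (n + n))) = 2 * n - 1 + 2 * n := by
      rw [Nat.cast_pred hodd.pos]
      ring
    rw [← class₁ (n - 1) le_rfl, ← class₃ (n - 1) le_rfl, e₁, e₃,
      ← innerMate_of_twist (.inl rfl), innerMate_involutive.apply_mem_iff hσ]
  have hodd_mem : ∀ y, parity (n + n) y = 1 → (y ∈ S ↔ (3 : ZMod (2 * (n + n))) ∈ S) := by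
    intro y hy
    obtain ⟨k, hk, rfl | rfl⟩ := exists_eq_of_parity_eq_one hodd hy
    · exact class₃ k hk
    · exact (class₁ k hk).trans link
  have hall : ∀ y, y ∈ S ↔ (3 : ZMod (2 * (n + n))) ∈ S := fun y => by
    by_cases hy : parity (n + n) y = 1
    · exact hodd_mem y hy
    · rw [← outerMate_involutive.apply_mem_iff hβ, outerMate_of_even hy]
      exact hodd_mem _ ((parity_add_eq_one_iff parity_one).mpr hy)
  exact (hall y).mpr ((hall x).mp hx)

theorem mem_of_spokeMate_cycleMate_invariant (hodd : Odd n) {A : Set (PapVert (2 * (n + n)))}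
    (hs : ∀ w ∈ A, spokeMate w ∈ A) (hc : ∀ w ∈ A, cycleMate n w ∈ A)
    {w : PapVert (2 * (n + n))} (hw : w ∈ A) (v : PapVert (2 * (n + n))) : v ∈ A := by
  have houter : ∀ w ∈ A, (false, w.2) ∈ A := by
    rintro ⟨_ | _, x⟩ h
    exacts [h, hs _ h]
  have hmem := mem_of_outerMate_innerMate_invariant hodd (S := {x | (false, x) ∈ A})
    (fun x hx => hc _ hx) (fun x hx => hs _ (hc _ (hs _ hx))) (houter w hw) v.2
  obtain ⟨_ | _, x⟩ := v
  exacts [hmem, hs _ hmem]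

end Connectivity

section Matching

variable {n : ℕ}

theorem papillon_adj_matchMate_of_odd (hn : 1 ≤ n) {w : PapVert (2 * (n + n))}
    (hw : parity (n + n) w.2 = 1) : (papillon n n).Adj w (matchMate w) := by
  have : NeZero (2 * (n + n)) := ⟨by omega⟩
  have : Fact (1 < 2 * (n + n)) := ⟨by omega⟩
  obtain ⟨b, x⟩ := w
  obtain ⟨i, hi, rfl⟩ : ∃ i < 2 * (n + n), x = i :=
    ⟨x.val, ZMod.val_lt x, (ZMod.natCast_zmod_val x).symm⟩
  have hodd : Odd i := (parity_natCast_eq_one_iff i).mp hw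
  rw [papillon, fromEdgeSet_adj]
  refine ⟨?_, by simp [matchMate, pairMate_of_odd hw]⟩
  simp only [matchMate, pairMate_of_odd hw, papillonEdges, Set.mem_ofPred_eq]
  cases b
  · exact .inl ⟨i, by grind, by grind, by simp [pu]⟩
  · refine .inr (.inr (.inr (.inl ⟨(i + 1) / 2, by grind, by grind, ?_⟩)))
    rw [show 2 * ((i + 1) / 2) = i + 1 by grind, Nat.add_sub_cancel]
    simp [pv]

theorem papillon_adj_matchMate (hn : 1 ≤ n) (w : PapVert (2 * (n + n))) :
    (papillon n n).Adj w (matchMate w) := by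
  by_cases hw : parity (n + n) w.2 = 1
  · exact papillon_adj_matchMate_of_odd hn hw
  · have hodd : parity (n + n) (matchMate w).2 = 1 := by
      rw [matchMate, pairMate_of_even hw]
      exact (parity_sub_eq_one_iff parity_one).mpr hw
    simpa [matchMate_involutive w] using (papillon_adj_matchMate_of_odd hn hodd).symm

def oddMatching (n : ℕ) : Set (Sym2 (PapVert (2 * (n + n)))) :=
  Set.range fun w => s(w, matchMate w)

theorem isPerfMatching_oddMatching (hn : 1 ≤ n) : IsPerfMatching (papillon n n) (oddMatching n) :=
  isPerfMatching_range_mk matchMate_involutive (papillon_adj_matchMate hn)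

theorem eq_mate_of_mem_edgeSet (hn : 1 ≤ n) {e : Sym2 (PapVert (2 * (n + n)))}
    (he : e ∈ (papillon n n).edgeSet) {w : PapVert (2 * (n + n))} (hw : w ∈ e) :
    e = s(w, matchMate w) ∨ e = s(w, spokeMate w) ∨ e = s(w, cycleMate n w) := by
  rw [papillon, edgeSet_fromEdgeSet] at he
  obtain ⟨v, rfl | rfl | rfl⟩ := exists_eq_mate_of_mem_papillonEdges hn he.1
  · exact .inl (Sym2.mk_apply_eq_of_mem matchMate_involutive hw)
  · exact .inr (.inl (Sym2.mk_apply_eq_of_mem spokeMate_involutive hw))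
  · exact .inr (.inr (Sym2.mk_apply_eq_of_mem cycleMate_involutive hw))

theorem eq_spokeMate_or_eq_cycleMate (hn : 1 ≤ n) {N : Set (Sym2 (PapVert (2 * (n + n))))}
    (hN : IsPerfMatching (papillon n n) N) (hdisj : Disjoint (oddMatching n) N)
    {e : Sym2 (PapVert (2 * (n + n)))} (he : e ∈ N) {w : PapVert (2 * (n + n))} (hw : w ∈ e) :
    e = s(w, spokeMate w) ∨ e = s(w, cycleMate n w) :=
  (eq_mate_of_mem_edgeSet hn (hN.1 he) hw).resolve_left fun h =>
    Set.disjoint_left.mp hdisj ⟨w, h.symm⟩ he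

theorem eq_matchMate_of_mem_oddMatching {e : Sym2 (PapVert (2 * (n + n)))}
    (he : e ∈ oddMatching n) {w : PapVert (2 * (n + n))} (hw : w ∈ e) : e = s(w, matchMate w) := by
  obtain ⟨v, rfl⟩ := he
  exact Sym2.mk_apply_eq_of_mem matchMate_involutive hw

theorem not_isHamCycleSet_of_spokes_mem (hn : 1 ≤ n) {N : Set (Sym2 (PapVert (2 * (n + n))))}
    (hN : IsPerfMatching (papillon n n) N) (hspoke : ∀ w, s(w, spokeMate w) ∈ N) :
    ¬ IsHamCycleSet (papillon n n) (oddMatching n ∪ N) := by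
  intro hHam
  have h3 := hHam.mem_of_invariant (f := matchMate) (g := spokeMate)
    (A := {w | w.2 = 1 ∨ w.2 = 2})
    (fun e he w hw => he.imp (eq_matchMate_of_mem_oddMatching · hw)
      (hN.eq_of_mem · hw (hspoke w) (Sym2.mem_mk_left _ _)))
    (by
      rintro ⟨b, x⟩ (rfl | rfl)
      · exact .inr (by simp [matchMate, pairMate_of_odd parity_one, one_add_one_eq_two])
      · exact .inl (by simp [matchMate, pairMate_of_even parity_two_ne_one]; norm_num))
    (fun w hw => hw) (v := (false, 1)) (.inl rfl) (false, 3)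
  have hne : ∀ a : ℕ, a < 3 → ((3 : ℕ) : ZMod (2 * (n + n))) ≠ a := fun a ha =>
    ZMod.natCast_ne_natCast_of_lt (by omega) (by omega) (by omega)
  rcases h3 with h | h
  · exact hne 1 (by norm_num) (by exact_mod_cast h)
  · exact hne 2 (by norm_num) (by exact_mod_cast h)

theorem not_isHamCycleSet_of_cycleMate {N : Set (Sym2 (PapVert (2 * (n + n))))}
    (hN : ∀ e ∈ N, ∀ w ∈ e, e = s(w, cycleMate n w)) :
    ¬ IsHamCycleSet (papillon n n) (oddMatching n ∪ N) := by
  intro hHam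
  have h := hHam.mem_of_invariant (f := matchMate) (g := cycleMate n) (A := {w | w.1 = false})
    (fun e he w hw => he.imp (eq_matchMate_of_mem_oddMatching · hw) (hN e · w hw))
    (fun w hw => hw) (by rintro ⟨_ | _, x⟩ hw <;> simp_all [cycleMate])
    (v := (false, 0)) rfl (true, 0)
  exact Bool.noConfusion h

end Matching

end Papillon

open Papillon in
/-- For every positive odd integer `n`, the balanced papillon graph `P_n` does not have
the PMH-property. -/
theorem statement14 (n : ℕ) (hn : 1 ≤ n) (hodd : Odd n) : ¬ HasPMH (papillon n n) := by
  intro hPMH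
  have hM := isPerfMatching_oddMatching hn
  obtain ⟨N, hN, hHam⟩ := hPMH _ hM
  have hNe : ∀ e ∈ N, ∀ w ∈ e, e = s(w, spokeMate w) ∨ e = s(w, cycleMate n w) :=
    fun e he w hw => eq_spokeMate_or_eq_cycleMate hn hN (hHam.disjoint hM hN) he hw
  by_cases hspoke : ∃ w, s(w, spokeMate w) ∈ N
  · obtain ⟨w, hw⟩ := hspoke
    refine not_isHamCycleSet_of_spokes_mem hn hN (fun v => ?_) hHam
    refine mem_of_spokeMate_cycleMate_invariant hodd (A := {v | s(v, spokeMate v) ∈ N})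
      (fun v hv => ?_) (fun v hv => ?_) hw v
    · rwa [Set.mem_ofPred_eq, spokeMate_involutive v, Sym2.eq_swap]
    · exact hN.mk_apply_mem cycleMate_involutive spokeMate_ne_cycleMate hNe hv
  · push Not at hspoke
    exact not_isHamCycleSet_of_cycleMate
      (fun e he w hw => (hNe e he w hw).resolve_left fun h => hspoke w (h ▸ he)) hHam
end

section
/- Let r and ℓ be positive integers at least one of which is odd. Then the set M = ⋃_{i=1}^{r+ℓ} {u_{2i−1}u_{2i}, v_{2i−1}v_{2i}} is a perfect matching of the papillon graph P_{r,ℓ}, and there is no Hamiltonian cycle of P_{r,ℓ} whose edge set contains M; equivalently, there is no perfect matching N of P_{r,ℓ} such that M ∪ N is the edge set of a Hamiltonian cycle of P_{r,ℓ}. -/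
open SimpleGraph


/-!
A Hamiltonian cycle `H ⊇ M` meets every vertex in exactly one edge outside `M`. At `u_{2k}` and
`u_{2k+1}` this says that the outer edge `u_{2k}u_{2k+1}` lies in `H` iff neither spoke at its
ends does, and at an inner vertex that its spoke lies in `H` iff its inner chord does not.
Hence an inner chord `v_{2k-1}v_{2k+2}` lies in `H` iff `u_{2k-2}u_{2k-1}` does iff
`u_{2k+2}u_{2k+3}` does, and the twisted chord `v_2v_{2s+2}` links `u_2u_3` with
`u_{2s+2}u_{2s+3}`. As `r + ℓ` or `s` is odd, these links connect all outer edges outside `M`.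
If all of them lie in `H`, then `H` uses no spoke and never leaves the outer cycle; if none does,
then `H` closes up on `u_1u_2v_2v_1`.
-/

theorem Set.mem_iff_notMem_of_ncard_eq_two {α : Type*} {S : Set α} {a b d : α}
    (hS : S.ncard = 2) (hsub : S ⊆ {a, b, d}) (ha : a ∈ S)
    (hab : a ≠ b) (had : a ≠ d) (hbd : b ≠ d) : b ∈ S ↔ d ∉ S := by
  obtain ⟨x, y, hxy, rfl⟩ := Set.ncard_eq_two.1 hS
  simp only [Set.insert_subset_iff, Set.singleton_subset_iff, Set.mem_insert_iff,
    Set.mem_singleton_iff] at hsub ha ⊢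
  grind

theorem Set.eq_or_eq_of_ncard_eq_two {α : Type*} {S : Set α} {a b y : α}
    (hS : S.ncard = 2) (ha : a ∈ S) (hb : b ∈ S) (hab : a ≠ b) (hy : y ∈ S) : y = a ∨ y = b := by
  obtain ⟨x, z, hxz, rfl⟩ := Set.ncard_eq_two.1 hS
  simp only [Set.mem_insert_iff, Set.mem_singleton_iff] at ha hb hy
  grind

theorem ZMod.natCast_inj_of_mem_Icc {N a b : ℕ} (ha : 1 ≤ a) (haN : a ≤ N) (hb : 1 ≤ b)
    (hbN : b ≤ N) : (a : ZMod N) = b ↔ a = b := by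
  refine ⟨fun h => ?_, congrArg _⟩
  rw [ZMod.natCast_eq_natCast_iff'] at h
  rcases haN.eq_or_lt with rfl | haN <;> rcases hbN.eq_or_lt with rfl | hbN
  all_goals simp_all [Nat.mod_eq_of_lt]
  all_goals omega

theorem ZMod.exists_mem_Icc_natCast_eq {N : ℕ} [NeZero N] (j : ZMod N) :
    ∃ a, 1 ≤ a ∧ a ≤ N ∧ (a : ZMod N) = j := by
  by_cases h : j.val = 0
  · exact ⟨N, NeZero.one_le, le_rfl, by rw [ZMod.natCast_self, eq_comm, ← ZMod.val_eq_zero, h]⟩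
  · exact ⟨j.val, by omega, (ZMod.val_lt j).le, ZMod.natCast_zmod_val j⟩

theorem ZMod.sub_one_ne_add_one {N : ℕ} (hN : 2 < N) (j : ZMod N) : j - 1 ≠ j + 1 := by
  intro h
  have h2 : ((2 : ℕ) : ZMod N) = 0 := by
    push_cast
    linear_combination -h
  rw [ZMod.natCast_eq_zero_iff] at h2
  exact absurd (Nat.le_of_dvd two_pos h2) (by omega)

theorem iff_add_two_mul {x : ℕ → Prop} {a : ℕ} :
    ∀ {k : ℕ}, (∀ t < k, x (a + 2 * t) ↔ x (a + 2 * t + 2)) → (x a ↔ x (a + 2 * k))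
  | 0, _ => Iff.rfl
  | k + 1, h => (iff_add_two_mul fun t ht => h t (by omega)).trans (h k (by omega))

theorem iff_mod_of_periodic {x : ℕ → Prop} {m : ℕ} (hper : ∀ i, x (i + m) ↔ x i) (i : ℕ) :
    x i ↔ x (i % m) := by
  rw [show x i = x (i % m + m * (i / m)) by rw [Nat.mod_add_div]]
  induction i / m with
  | zero => simp
  | succ q ih => rw [← ih, show i % m + m * (q + 1) = i % m + m * q + m by ring, hper]

/-- `hstep` links the rungs of each parity except across the gap at `s`; the twist `hjump` and
the wrap-around `x m ↔ x 0` join the pieces into a single class as soon as `m` or `s` is odd. -/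
theorem iff_zero_of_twisted_ladder {m s : ℕ} {x : ℕ → Prop} (hsm : s < m)
    (hodd : Odd m ∨ Odd s) (hper : ∀ i, x (i + m) ↔ x i)
    (hstep : ∀ j, j + 2 ≤ m → j + 1 ≠ s → (x j ↔ x (j + 2))) (hjump : x 1 ↔ x (s + 1))
    (i : ℕ) : x i ↔ x 0 := by
  have chain : ∀ a b, a ≤ b → b ≤ m → (b - a) % 2 = 0 →
      ¬ (a < s ∧ s < b ∧ (s - a) % 2 = 1) → (x b ↔ x a) := by
    intro a b hab hbm hev hcross
    rw [show b = a + 2 * ((b - a) / 2) by omega]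
    exact (iff_add_two_mul fun t ht => hstep _ (by omega) (by omega)).symm
  simp only [Nat.odd_iff] at hodd
  have h10 : x 1 ↔ x 0 := by
    refine Iff.trans ?_ (hper 0)
    by_cases h : m % 2 = 1 ∧ s % 2 = 1
    · rw [zero_add, chain 1 m (by omega) le_rfl (by omega) (by omega)]
    · rw [zero_add, chain (s + 1) m (by omega) le_rfl (by omega) (by omega), hjump]
  rw [iff_mod_of_periodic hper]
  have hj : i % m < m := Nat.mod_lt _ (by omega)
  by_cases hcross : s < i % m ∧ (i % m - s) % 2 = 1
  · rw [chain (s + 1) (i % m) (by omega) hj.le (by omega) (by omega), ← hjump, h10]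
  · rw [chain (i % m % 2) (i % m) (by omega) hj.le (by omega) (by omega)]
    rcases Nat.mod_two_eq_zero_or_one (i % m) with h | h <;> rw [h]
    exact h10

namespace SimpleGraph.Walk

variable {V : Type*} {G : SimpleGraph V} {x w a b d : V} {c : G.Walk x x}

theorem IsCycle.mem_edges_iff_notMem_edges (hc : c.IsCycle) (hw : w ∈ c.support)
    (hab : a ≠ b) (had : a ≠ d) (hbd : b ≠ d) (hadj : ∀ y, G.Adj w y → y = a ∨ y = b ∨ y = d)
    (ha : s(w, a) ∈ c.edges) : s(w, b) ∈ c.edges ↔ s(w, d) ∉ c.edges := by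
  simp only [← adj_toSubgraph_iff_mem_edges] at ha ⊢
  exact Set.mem_iff_notMem_of_ncard_eq_two (hc.ncard_neighborSet_toSubgraph_eq_two hw)
    (fun y hy => hadj y (c.toSubgraph.adj_sub hy)) ha hab had hbd

theorem IsCycle.eq_or_eq_of_mem_edges (hc : c.IsCycle) (hab : a ≠ b)
    (ha : s(w, a) ∈ c.edges) (hb : s(w, b) ∈ c.edges) {y : V} (hy : s(w, y) ∈ c.edges) :
    y = a ∨ y = b := by
  simp only [← adj_toSubgraph_iff_mem_edges] at ha hb hy
  exact Set.eq_or_eq_of_ncard_eq_two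
    (hc.ncard_neighborSet_toSubgraph_eq_two (mem_support_of_adj_toSubgraph ha)) ha hb hab hy

theorem mem_iff_of_mem_support {u v : V} (p : G.Walk u v) {S : Set V}
    (hS : ∀ a b, s(a, b) ∈ p.edges → a ∈ S → b ∈ S) {y : V} (hy : y ∈ p.support) :
    y ∈ S ↔ u ∈ S := by
  induction p with
  | nil => simp_all
  | cons h q ih =>
    rw [support_cons, List.mem_cons] at hy
    obtain rfl | hy := hy
    · rfl
    · rw [ih (fun a b hab => hS a b (by simp [hab])) hy]
      exact ⟨fun h' => hS _ _ (by simp [Sym2.eq_swap]) h', hS _ _ (by simp)⟩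

theorem IsHamiltonianCycle.mem_iff_mem_of_closed [DecidableEq V] (hc : c.IsHamiltonianCycle)
    {S : Set V} (hS : ∀ a b, s(a, b) ∈ c.edges → a ∈ S → b ∈ S) (a b : V) : a ∈ S ↔ b ∈ S :=
  (c.mem_iff_of_mem_support hS (hc.mem_support a)).trans
    (c.mem_iff_of_mem_support hS (hc.mem_support b)).symm

end SimpleGraph.Walk

namespace Papillon

variable {r l : ℕ}

def matching (r l : ℕ) : Set (Sym2 (PapVert (2 * (r + l)))) :=
  {e | ∃ i, 1 ≤ i ∧ i ≤ r + l ∧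
    (e = s(pu (2 * (r + l)) (2 * i - 1), pu (2 * (r + l)) (2 * i)) ∨
     e = s(pv (2 * (r + l)) (2 * i - 1), pv (2 * (r + l)) (2 * i)))}

/-- The other end of the inner-cycle chord at `v_{2k-1}`. -/
def oddChordEnd (r l k : ℕ) : ℕ :=
  if k = min r l then 2 * (r + l) - 1 else if k = r + l then 2 * min r l - 1 else 2 * k + 2

/-- The other end of the inner-cycle chord at `v_{2k}`. -/
def evenChordEnd (r l k : ℕ) : ℕ :=
  if k = 1 then 2 * min r l + 2 else if k = min r l + 1 then 2 else 2 * k - 3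

def outerLink (r l k : ℕ) : Sym2 (PapVert (2 * (r + l))) :=
  s(pu _ (2 * k), pu _ (2 * k + 1))

theorem outerLink_add_period (k : ℕ) : outerLink r l (k + (r + l)) = outerLink r l k := by
  rw [outerLink, outerLink, show 2 * (k + (r + l)) = 2 * k + 2 * (r + l) by ring,
    show 2 * k + 2 * (r + l) + 1 = 2 * k + 1 + 2 * (r + l) by ring]
  simp only [pu, Nat.cast_add, ZMod.natCast_self, add_zero]

theorem pu_inj {N a b : ℕ} (ha : 1 ≤ a) (haN : a ≤ N) (hb : 1 ≤ b) (hbN : b ≤ N) :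
    pu N a = pu N b ↔ a = b := by
  simp [pu, ZMod.natCast_inj_of_mem_Icc ha haN hb hbN]

theorem pv_inj {N a b : ℕ} (ha : 1 ≤ a) (haN : a ≤ N) (hb : 1 ≤ b) (hbN : b ≤ N) :
    pv N a = pv N b ↔ a = b := by
  simp [pv, ZMod.natCast_inj_of_mem_Icc ha haN hb hbN]

theorem pu_ne_pv {N : ℕ} (a b : ℕ) : pu N a ≠ pv N b := by simp [pu, pv]

theorem eq_of_adj_outer {j : ZMod (2 * (r + l))} {y : PapVert (2 * (r + l))}
    (h : (papillon r l).Adj (false, j) y) :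
    y = (false, j - 1) ∨ y = (false, j + 1) ∨ y = (true, j) := by
  simp only [papillon, fromEdgeSet_adj, papillonEdges, Set.mem_ofPred_eq, pu, pv, Sym2.eq_iff,
    Prod.ext_iff, ZMod.natCast_self] at h
  push_cast at h
  grind

theorem eq_of_adj_pu {a : ℕ} {y : PapVert (2 * (r + l))} (ha : 1 ≤ a)
    (h : (papillon r l).Adj (pu _ a) y) : y = pu _ (a - 1) ∨ y = pu _ (a + 1) ∨ y = pv _ a := by
  simpa [pu, pv, Nat.cast_sub ha] using eq_of_adj_outer h

theorem eq_of_adj_pv_odd {k : ℕ} {y : PapVert (2 * (r + l))} (hr : 1 ≤ r) (hl : 1 ≤ l)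
    (hk : 1 ≤ k) (hkn : k ≤ r + l) (h : (papillon r l).Adj (pv _ (2 * k - 1)) y) :
    y = pu _ (2 * k - 1) ∨ y = pv _ (2 * k) ∨ y = pv _ (oddChordEnd r l k) := by
  obtain ⟨he, -⟩ := (fromEdgeSet_adj _).1 h
  simp only [papillonEdges, Set.mem_ofPred_eq, Sym2.eq_iff] at he
  rcases he with ⟨i, hi, hi', he⟩ | he | ⟨i, hi, hi', he⟩ | ⟨i, hi, hi', he⟩ |
      ⟨i, hi, hi', hne, he⟩ | he | he <;>
    rcases he with ⟨h1, rfl⟩ | ⟨h1, rfl⟩ <;>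
    first
    | (simp [pu, pv] at h1; done)
    | rw [pv_inj (by omega) (by omega) (by omega) (by omega)] at h1
      unfold oddChordEnd
      split_ifs <;> first
        | (left; exact congrArg _ (by omega))
        | (right; left; exact congrArg _ (by omega))
        | (right; right; exact congrArg _ (by omega))

theorem eq_of_adj_pv_even {k : ℕ} {y : PapVert (2 * (r + l))} (hr : 1 ≤ r) (hl : 1 ≤ l)
    (hk : 1 ≤ k) (hkn : k ≤ r + l) (h : (papillon r l).Adj (pv _ (2 * k)) y) :
    y = pu _ (2 * k) ∨ y = pv _ (2 * k - 1) ∨ y = pv _ (evenChordEnd r l k) := by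
  obtain ⟨he, -⟩ := (fromEdgeSet_adj _).1 h
  simp only [papillonEdges, Set.mem_ofPred_eq, Sym2.eq_iff] at he
  rcases he with ⟨i, hi, hi', he⟩ | he | ⟨i, hi, hi', he⟩ | ⟨i, hi, hi', he⟩ |
      ⟨i, hi, hi', hne, he⟩ | he | he <;>
    rcases he with ⟨h1, rfl⟩ | ⟨h1, rfl⟩ <;>
    first
    | (simp [pu, pv] at h1; done)
    | rw [pv_inj (by omega) (by omega) (by omega) (by omega)] at h1
      unfold evenChordEnd
      split_ifs <;> first
        | (left; exact congrArg _ (by omega))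
        | (right; left; exact congrArg _ (by omega))
        | (right; right; exact congrArg _ (by omega))

variable {x : PapVert (2 * (r + l))} {c : (papillon r l).Walk x x}

section HamiltonianCycle

variable (hr : 1 ≤ r) (hl : 1 ≤ l) (hc : c.IsHamiltonianCycle)
include hr hl hc

theorem succ_mem_edges_iff {a : ℕ} (ha : 1 ≤ a) (hM : s(pu _ a, pu _ (a - 1)) ∈ c.edges) :
    s(pu _ a, pu _ (a + 1)) ∈ c.edges ↔ s(pu _ a, pv _ a) ∉ c.edges := by
  refine hc.isCycle.mem_edges_iff_notMem_edges (hc.mem_support _) ?_ (pu_ne_pv _ _)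
    (pu_ne_pv _ _) (fun y hy => by have := eq_of_adj_pu ha hy; tauto) hM
  simpa [pu, Nat.cast_sub ha] using ZMod.sub_one_ne_add_one (by omega) _

theorem pred_mem_edges_iff {a : ℕ} (ha : 1 ≤ a) (hM : s(pu _ a, pu _ (a + 1)) ∈ c.edges) :
    s(pu _ a, pu _ (a - 1)) ∈ c.edges ↔ s(pu _ a, pv _ a) ∉ c.edges := by
  refine hc.isCycle.mem_edges_iff_notMem_edges (hc.mem_support _) ?_ (pu_ne_pv _ _)
    (pu_ne_pv _ _) (fun y hy => by have := eq_of_adj_pu ha hy; tauto) hM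
  simpa [pu, Nat.cast_sub ha] using (ZMod.sub_one_ne_add_one (by omega) _).symm

theorem spoke_mem_edges_iff_odd {k : ℕ} (hk : 1 ≤ k) (hkn : k ≤ r + l)
    (hM : s(pv _ (2 * k - 1), pv _ (2 * k)) ∈ c.edges) :
    s(pv _ (2 * k - 1), pu _ (2 * k - 1)) ∈ c.edges ↔
      s(pv _ (2 * k - 1), pv _ (oddChordEnd r l k)) ∉ c.edges := by
  refine hc.isCycle.mem_edges_iff_notMem_edges (hc.mem_support _) (pu_ne_pv _ _).symm ?_
    (pu_ne_pv _ _) (fun y hy => by have := eq_of_adj_pv_odd hr hl hk hkn hy; tauto) hM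
  unfold oddChordEnd
  split_ifs <;> rw [Ne, pv_inj (by omega) (by omega) (by omega) (by omega)] <;> omega

theorem spoke_mem_edges_iff_even {k : ℕ} (hk : 1 ≤ k) (hkn : k ≤ r + l)
    (hM : s(pv _ (2 * k), pv _ (2 * k - 1)) ∈ c.edges) :
    s(pv _ (2 * k), pu _ (2 * k)) ∈ c.edges ↔
      s(pv _ (2 * k), pv _ (evenChordEnd r l k)) ∉ c.edges := by
  refine hc.isCycle.mem_edges_iff_notMem_edges (hc.mem_support _) (pu_ne_pv _ _).symm ?_
    (pu_ne_pv _ _) (fun y hy => by have := eq_of_adj_pv_even hr hl hk hkn hy; tauto) hM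
  unfold evenChordEnd
  split_ifs <;> rw [Ne, pv_inj (by omega) (by omega) (by omega) (by omega)] <;> omega

variable (hM : matching r l ⊆ {e | e ∈ c.edges})
include hM

theorem evenChord_mem_edges_iff {k : ℕ} (hk : 1 ≤ k) (hkn : k ≤ r + l) :
    s(pv _ (2 * k), pv _ (evenChordEnd r l k)) ∈ c.edges ↔ outerLink r l k ∈ c.edges := by
  have hspoke := spoke_mem_edges_iff_even hr hl hc hk hkn
    (by rw [Sym2.eq_swap]; exact hM ⟨k, hk, hkn, Or.inr rfl⟩)
  have hlink := succ_mem_edges_iff hr hl hc (a := 2 * k) (by omega)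
    (by rw [Sym2.eq_swap]; exact hM ⟨k, hk, hkn, Or.inl rfl⟩)
  rw [Sym2.eq_swap] at hspoke
  rw [outerLink, hlink, hspoke, not_not]

theorem oddChord_mem_edges_iff {k : ℕ} (hk : 1 ≤ k) (hkn : k ≤ r + l) :
    s(pv _ (2 * k - 1), pv _ (oddChordEnd r l k)) ∈ c.edges ↔
      outerLink r l (k - 1) ∈ c.edges := by
  have hspoke := spoke_mem_edges_iff_odd hr hl hc hk hkn (hM ⟨k, hk, hkn, Or.inr rfl⟩)
  have hlink := pred_mem_edges_iff hr hl hc (a := 2 * k - 1) (by omega)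
    (by rw [show 2 * k - 1 + 1 = 2 * k by omega]; exact hM ⟨k, hk, hkn, Or.inl rfl⟩)
  rw [Sym2.eq_swap] at hspoke
  rw [outerLink, show 2 * (k - 1) = 2 * k - 1 - 1 by omega,
    show 2 * k - 1 - 1 + 1 = 2 * k - 1 by omega, Sym2.eq_swap (a := pu _ (2 * k - 1 - 1)),
    hlink, hspoke, not_not]

theorem outerLink_mem_edges_iff (hodd : Odd r ∨ Odd l) (i : ℕ) :
    outerLink r l i ∈ c.edges ↔ outerLink r l 0 ∈ c.edges := by
  refine iff_zero_of_twisted_ladder (x := fun i => outerLink r l i ∈ c.edges) (m := r + l)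
    (s := min r l) (by omega) ?_ (fun i => by rw [outerLink_add_period]) (fun j hj hjs => ?_) ?_ i
  · simp only [Nat.odd_iff] at hodd ⊢
    omega
  · have hchord : s(pv (2 * (r + l)) (2 * (j + 1) - 1), pv _ (oddChordEnd r l (j + 1))) =
        s(pv _ (2 * (j + 2)), pv _ (evenChordEnd r l (j + 2))) := by
      rw [oddChordEnd, evenChordEnd, if_neg hjs, if_neg (by omega), if_neg (by omega),
        if_neg (by omega), Sym2.eq_swap, show 2 * (j + 1) + 2 = 2 * (j + 2) by ring,
        show 2 * (j + 2) - 3 = 2 * (j + 1) - 1 by omega]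
    rw [← evenChord_mem_edges_iff hr hl hc hM (by omega) hj, ← hchord,
      oddChord_mem_edges_iff hr hl hc hM (by omega) (by omega), Nat.add_sub_cancel]
  · rw [← evenChord_mem_edges_iff hr hl hc hM le_rfl (by omega),
      ← evenChord_mem_edges_iff hr hl hc hM (by omega) (by omega),
      evenChordEnd, evenChordEnd, if_pos rfl, if_neg (by omega), if_pos rfl, Sym2.eq_swap]
    rfl

theorem false_of_forall_outerLink_mem (hall : ∀ k, outerLink r l k ∈ c.edges) : False := by
  have : NeZero (2 * (r + l)) := ⟨by omega⟩
  have hspoke : ∀ a, 1 ≤ a → a ≤ 2 * (r + l) → s(pu _ a, pv _ a) ∉ c.edges := by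
    intro a ha haN
    obtain ⟨k, rfl | rfl⟩ : ∃ k, a = 2 * k ∨ a = 2 * k + 1 := ⟨a / 2, by omega⟩
    · exact (succ_mem_edges_iff hr hl hc ha
        (by rw [Sym2.eq_swap]; exact hM ⟨k, by omega, by omega, Or.inl rfl⟩)).1 (hall k)
    · have hMk := hM ⟨k + 1, by omega, by omega, Or.inl rfl⟩
      rw [show 2 * (k + 1) - 1 = 2 * k + 1 by omega, show 2 * (k + 1) = 2 * k + 1 + 1 by omega]
        at hMk
      exact (pred_mem_edges_iff hr hl hc ha hMk).1 (by rw [Sym2.eq_swap]; exact hall k)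
  have hclosed : ∀ a b, s(a, b) ∈ c.edges → a.1 = false → b.1 = false := by
    rintro ⟨_, j⟩ b hab rfl
    obtain ⟨a, ha, haN, rfl⟩ := ZMod.exists_mem_Icc_natCast_eq j
    rcases eq_of_adj_pu ha (c.adj_of_mem_edges hab) with rfl | rfl | rfl
    · rfl
    · rfl
    · exact absurd hab (hspoke a ha haN)
  simpa [pu, pv] using
    hc.mem_iff_mem_of_closed (S := {p | p.1 = false}) hclosed (pu _ 1) (pv _ 1)

theorem false_of_forall_outerLink_notMem (hnone : ∀ k, outerLink r l k ∉ c.edges) : False := by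
  have hMu : s(pu _ 1, pu _ 2) ∈ c.edges := hM ⟨1, le_rfl, by omega, Or.inl rfl⟩
  have hMv : s(pv _ 1, pv _ 2) ∈ c.edges := hM ⟨1, le_rfl, by omega, Or.inr rfl⟩
  have hs1 : s(pu _ 1, pv _ 1) ∈ c.edges := not_not.1 fun h =>
    hnone 0 (by rw [outerLink, Sym2.eq_swap]; exact (pred_mem_edges_iff hr hl hc le_rfl hMu).2 h)
  have hs2 : s(pu _ 2, pv _ 2) ∈ c.edges := not_not.1 fun h => hnone 1
    ((succ_mem_edges_iff hr hl hc (a := 2) (by omega) (by rw [Sym2.eq_swap]; exact hMu)).2 h)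
  have hclosed : ∀ a b, s(a, b) ∈ c.edges → a ∈ ({pu _ 1, pu _ 2, pv _ 1, pv _ 2} : Set _) →
      b ∈ ({pu _ 1, pu _ 2, pv _ 1, pv _ 2} : Set _) := by
    rintro a b hab (rfl | rfl | rfl | rfl)
    · rcases hc.isCycle.eq_or_eq_of_mem_edges (pu_ne_pv _ _) hMu hs1 hab with rfl | rfl <;> simp
    · rcases hc.isCycle.eq_or_eq_of_mem_edges (pu_ne_pv _ _) (by rwa [Sym2.eq_swap]) hs2 hab
        with rfl | rfl <;> simp
    · rcases hc.isCycle.eq_or_eq_of_mem_edges (pu_ne_pv _ _).symm hMv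
        (by rwa [Sym2.eq_swap]) hab with rfl | rfl <;> simp
    · rcases hc.isCycle.eq_or_eq_of_mem_edges (pu_ne_pv _ _).symm (by rwa [Sym2.eq_swap])
        (by rwa [Sym2.eq_swap]) hab with rfl | rfl <;> simp
  rcases (hc.mem_iff_mem_of_closed hclosed (pu _ 1) (pu _ 3)).1 (by simp) with h | h | h | h
  · rw [pu_inj (by norm_num) (by omega) (by norm_num) (by omega)] at h
    omega
  · rw [pu_inj (by norm_num) (by omega) (by norm_num) (by omega)] at h
    omega
  · exact pu_ne_pv _ _ h
  · exact pu_ne_pv _ _ h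

end HamiltonianCycle

theorem mem_pair_iff {a i : ℕ} {b b' : Bool} (ha : 1 ≤ a) (haN : a ≤ 2 * (r + l)) (hi : 1 ≤ i)
    (hin : i ≤ r + l) :
    ((b, (a : ZMod (2 * (r + l)))) ∈
        s((b', ((2 * i - 1 : ℕ) : ZMod _)), (b', ((2 * i : ℕ) : ZMod _))) ↔
      b = b' ∧ (a + 1) / 2 = i) := by
  rw [Sym2.mem_iff, Prod.mk.injEq, Prod.mk.injEq, ZMod.natCast_inj_of_mem_Icc ha haN (by omega)
    (by omega), ZMod.natCast_inj_of_mem_Icc ha haN (by omega) (by omega), ← and_or_left]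
  exact and_congr_right fun _ => by omega

theorem isPerfMatching_matching (hr : 1 ≤ r) (hl : 1 ≤ l) :
    IsPerfMatching (papillon r l) (matching r l) := by
  have : NeZero (2 * (r + l)) := ⟨by omega⟩
  refine ⟨?_, fun ⟨b, j⟩ => ?_⟩
  · rintro e ⟨i, hi, hin, rfl | rfl⟩ <;> rw [papillon, edgeSet_fromEdgeSet] <;>
      refine ⟨?_, ?_⟩
    · exact Or.inl ⟨2 * i - 1, by omega, by omega, by rw [show 2 * i - 1 + 1 = 2 * i by omega]⟩
    · rw [Sym2.mem_diagSet, Sym2.mk_isDiag_iff, pu_inj (by omega) (by omega) (by omega) (by omega)]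
      omega
    · exact Or.inr (Or.inr (Or.inr (Or.inl ⟨i, hi, hin, rfl⟩)))
    · rw [Sym2.mem_diagSet, Sym2.mk_isDiag_iff, pv_inj (by omega) (by omega) (by omega) (by omega)]
      omega
  obtain ⟨a, ha, haN, rfl⟩ := ZMod.exists_mem_Icc_natCast_eq j
  have hk : 1 ≤ (a + 1) / 2 ∧ (a + 1) / 2 ≤ r + l := by omega
  set k := (a + 1) / 2
  refine ⟨s((b, ((2 * k - 1 : ℕ) : ZMod _)), (b, ((2 * k : ℕ) : ZMod _))),
    ⟨⟨k, hk.1, hk.2, by cases b <;> simp [pu, pv]⟩, (mem_pair_iff ha haN hk.1 hk.2).2 ⟨rfl, rfl⟩⟩,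
    ?_⟩
  rintro e ⟨⟨i, hi, hin, rfl | rfl⟩, hv⟩ <;>
    obtain ⟨rfl, rfl⟩ := (mem_pair_iff ha haN hi hin).1 hv <;> rfl

theorem not_matching_subset_edges (hr : 1 ≤ r) (hl : 1 ≤ l) (hodd : Odd r ∨ Odd l)
    {x : PapVert (2 * (r + l))} {c : (papillon r l).Walk x x} (hc : c.IsHamiltonianCycle) :
    ¬ matching r l ⊆ {e | e ∈ c.edges} := by
  intro hM
  by_cases h0 : outerLink r l 0 ∈ c.edges
  · exact false_of_forall_outerLink_mem hr hl hc hM fun k =>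
      (outerLink_mem_edges_iff hr hl hc hM hodd k).2 h0
  · exact false_of_forall_outerLink_notMem hr hl hc hM fun k h =>
      h0 ((outerLink_mem_edges_iff hr hl hc hM hodd k).1 h)

end Papillon

/-- If at least one of the positive integers `r`, `ℓ` is odd, then
`M = ⋃_{i=1}^{r+ℓ} {u_{2i-1}u_{2i}, v_{2i-1}v_{2i}}` is a perfect matching of the
papillon graph `P_{r,ℓ}`, no Hamiltonian cycle of `P_{r,ℓ}` has an edge set containing
`M`, and (equivalently) there is no perfect matching `N` of `P_{r,ℓ}` such that `M ∪ N`
is the edge set of a Hamiltonian cycle of `P_{r,ℓ}`. -/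
theorem statement17 (r l : ℕ) (hr : 1 ≤ r) (hl : 1 ≤ l) (hodd : Odd r ∨ Odd l)
    (M : Set (Sym2 (PapVert (2 * (r + l)))))
    (hMdef : M = {e | ∃ i, 1 ≤ i ∧ i ≤ r + l ∧
      (e = s(pu (2 * (r + l)) (2 * i - 1), pu (2 * (r + l)) (2 * i)) ∨
       e = s(pv (2 * (r + l)) (2 * i - 1), pv (2 * (r + l)) (2 * i)))}) :
    IsPerfMatching (papillon r l) M ∧
    (∀ (x : PapVert (2 * (r + l))) (c : (papillon r l).Walk x x),
        c.IsHamiltonianCycle → ¬ (M ⊆ {e | e ∈ c.edges})) ∧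
    ¬ ∃ N, IsPerfMatching (papillon r l) N ∧ IsHamCycleSet (papillon r l) (M ∪ N) := by
  subst hMdef
  have hnot : ∀ x (c : (papillon r l).Walk x x), c.IsHamiltonianCycle → _ :=
    fun x c => Papillon.not_matching_subset_edges hr hl hodd
  refine ⟨Papillon.isPerfMatching_matching hr hl, hnot, ?_⟩
  rintro ⟨N, -, x, c, hc, hMN⟩
  exact hnot x c hc (hMN ▸ Set.subset_union_left)
end
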